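/- Bailey's product formula for ₀F₁: for every complex number x and ρ ∈ ℂ not a nonpositive integer, (∑_{m=0}^{∞} x^m/((ρ)_m m!)) · (∑_{n=0}^{∞} (−x)^n/((ρ)_n n!)) = ∑_{m=0}^{∞} (−x²/4)^m / ( (ρ)_m (ρ/2)_m ((ρ+1)/2)_m m! ), i.e., ₀F₁(−; ρ; x) · ₀F₁(−; ρ; −x) = ₀F₃(−; ρ, ρ/2, (ρ+1)/2; −x²/4). -/

import Mathlib

/-!
Multiply the two series as a Cauchy product. For `k + j = n`, the factorisations
`(ρ)ₙ = (ρ)ₖ (ρ + k)ⱼ = (ρ)ⱼ (ρ + j)ₖ` turn the `n`-th coefficient into `xⁿ / (n! (ρ)ₙ²)` times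
the value at `y = ρ + n - 1` of the polynomial `∑ (-1)ʲ C(n, k) (y)↓ₖ (y)↓ⱼ` in falling factorials.
This is the falling-factorial shadow of `(1 + t)^y (1 - t)^y = (1 - t²)^y`: at `y = N ∈ ℕ` it is
`n!` times the `n`-th coefficient of `(1 + X)ᴺ (1 - X)ᴺ = (1 - X²)ᴺ`, and a polynomial identity
holding at all naturals holds everywhere. So odd coefficients vanish, and the duplication formula
`(ρ)₂ₘ = 4ᵐ (ρ/2)ₘ ((ρ+1)/2)ₘ` puts the even ones in the shape of the `₀F₃` series.
-/

open Finset Polynomial Nat Filter Topology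
open scoped Nat

noncomputable def poch (a : ℂ) (n : ℕ) : ℂ := (ascPochhammer ℂ n).eval a

theorem tsum_two_mul_of_odd_eq_zero {M : Type*} [AddCommMonoid M] [TopologicalSpace M]
    {f : ℕ → M} (hf : ∀ m, f (2 * m + 1) = 0) : ∑' m, f (2 * m) = ∑' n, f n := by
  refine (mul_right_injective₀ two_ne_zero).tsum_eq fun n hn => ?_
  obtain ⟨m, rfl | rfl⟩ := n.even_or_odd'
  · exact ⟨m, rfl⟩
  · exact absurd (hf m) hn

theorem coeff_one_sub_X_pow {R : Type*} [CommRing R] (N j : ℕ) :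
    ((1 - X : R[X]) ^ N).coeff j = (-1) ^ j * N.choose j := by
  have : (1 - X : R[X]) ^ N = ((1 + X) ^ N).comp (C (-1) * X) := by
    simp [sub_eq_add_neg]
  rw [this, comp_C_mul_X_coeff, coeff_one_add_X_pow, mul_comm]

theorem sum_antidiagonal_choose_mul_neg_one_pow_mul_choose {R : Type*} [CommRing R] (N n : ℕ) :
    ∑ p ∈ antidiagonal n, (N.choose p.1 : R) * ((-1) ^ p.2 * N.choose p.2) =
      if 2 ∣ n then ((-1) ^ (n / 2) * N.choose (n / 2) : R) else 0 := by
  have h : ((1 + X) ^ N * (1 - X) ^ N : R[X]) = expand R 2 ((1 - X) ^ N) := by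
    rw [← mul_pow, map_pow, map_sub, map_one, expand_X]
    ring
  have := congrArg (coeff · n) h
  simp only [coeff_mul, coeff_one_add_X_pow, coeff_one_sub_X_pow, coeff_expand two_pos] at this
  rw [this]

theorem sum_antidiagonal_neg_one_pow_mul_choose_mul_descPochhammer {R : Type*} [CommRing R]
    (n : ℕ) :
    ∑ p ∈ antidiagonal n, ((-1) ^ p.2 * n.choose p.1 : R[X]) *
        (descPochhammer R p.1 * descPochhammer R p.2) =
      if 2 ∣ n then (-1) ^ (n / 2) * n.descFactorial (n / 2) * descPochhammer R (n / 2)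
      else 0 := by
  -- Over `ℤ` a polynomial is determined by its values at the naturals; map to `R` afterwards.
  suffices hℤ : ∑ p ∈ antidiagonal n, ((-1) ^ p.2 * n.choose p.1 : ℤ[X]) *
        (descPochhammer ℤ p.1 * descPochhammer ℤ p.2) =
      if 2 ∣ n then (-1) ^ (n / 2) * n.descFactorial (n / 2) * descPochhammer ℤ (n / 2)
      else 0 by
    have := congrArg (Polynomial.map (Int.castRingHom R)) hℤ
    split_ifs at this ⊢ <;> simpa [Polynomial.map_sum, descPochhammer_map] using this
  refine eq_of_infinite_eval_eq _ _ (Set.infinite_of_injective_forall_mem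
    (f := ((↑) : ℕ → ℤ)) Nat.cast_injective fun N => ?_)
  have hterm : ∀ p ∈ antidiagonal n, ((-1) ^ p.2 * n.choose p.1 : ℤ) *
      (N.descFactorial p.1 * N.descFactorial p.2) =
        n ! * ((N.choose p.1 : ℤ) * ((-1) ^ p.2 * N.choose p.2)) := by
    rintro ⟨k, j⟩ hkj
    rw [HasAntidiagonal.mem_antidiagonal] at hkj
    subst hkj
    rw [choose_symm_add, ← add_choose_mul_factorial_mul_factorial k j,
      descFactorial_eq_factorial_mul_choose, descFactorial_eq_factorial_mul_choose]
    push_cast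
    ring
  simp only [Set.mem_ofPred_eq, eval_finsetSum, eval_mul, eval_pow, eval_neg, eval_one,
    eval_natCast, descPochhammer_eval_eq_descFactorial]
  rw [sum_congr rfl hterm, ← mul_sum, sum_antidiagonal_choose_mul_neg_one_pow_mul_choose]
  split_ifs with h2
  · obtain ⟨m, rfl⟩ := h2
    simp only [eval_mul, eval_pow, eval_neg, eval_one, eval_natCast,
      descPochhammer_eval_eq_descFactorial]
    rw [Nat.mul_div_cancel_left m two_pos, descFactorial_eq_factorial_mul_choose N,
      ← factorial_mul_descFactorial (show m ≤ 2 * m by omega), show 2 * m - m = m by omega]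
    push_cast
    ring
  · simp

@[simp]
theorem poch_zero (a : ℂ) : poch a 0 = 1 := by simp [poch]

theorem poch_succ (a : ℂ) (n : ℕ) : poch a (n + 1) = poch a n * (a + n) :=
  ascPochhammer_succ_eval n a

theorem poch_add (a : ℂ) (m n : ℕ) : poch a (m + n) = poch a m * poch (a + m) n := by
  induction n with
  | zero => simp
  | succ n ih =>
    rw [← add_assoc, poch_succ, ih, poch_succ]
    push_cast
    ring

theorem poch_ne_zero {a : ℂ} (ha : ∀ k : ℕ, a ≠ -k) (n : ℕ) : poch a n ≠ 0 := by
  simp only [poch, ne_eq, ascPochhammer_eval_eq_zero_iff, not_exists, not_and]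
  exact fun k _ hk => ha k (by rw [hk, neg_neg])

theorem poch_two_mul (a : ℂ) (m : ℕ) :
    poch a (2 * m) = 4 ^ m * poch (a / 2) m * poch ((a + 1) / 2) m := by
  induction m with
  | zero => simp
  | succ m ih =>
    rw [show 2 * (m + 1) = 2 * m + 1 + 1 by ring, poch_succ, poch_succ, ih, poch_succ, poch_succ]
    push_cast
    ring

theorem descPochhammer_eval_add_sub_one (a : ℂ) (n : ℕ) :
    (descPochhammer ℂ n).eval (a + n - 1) = poch a n := by
  rw [descPochhammer_eval_eq_ascPochhammer, poch]
  ring_nf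

theorem right_ne_zero_of_poch_add {a : ℂ} {m n : ℕ} (h : poch a (m + n) ≠ 0) :
    poch (a + m) n ≠ 0 :=
  right_ne_zero_of_mul (poch_add a m n ▸ h)

theorem left_ne_zero_of_poch_add {a : ℂ} {m n : ℕ} (h : poch a (m + n) ≠ 0) : poch a m ≠ 0 :=
  left_ne_zero_of_mul (poch_add a m n ▸ h)

noncomputable def hyp0F1Term (ρ x : ℂ) (n : ℕ) : ℂ := x ^ n / (poch ρ n * n !)

theorem hyp0F1Term_succ (ρ x : ℂ) (n : ℕ) :
    hyp0F1Term ρ x (n + 1) = hyp0F1Term ρ x n * (x / ((ρ + n) * (n + 1))) := by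
  rw [hyp0F1Term, hyp0F1Term, div_mul_div_comm (x ^ n), poch_succ, factorial_succ, pow_succ]
  push_cast
  ring

theorem tendsto_div_mul_add_one_atTop_zero (ρ x : ℂ) :
    Tendsto (fun n : ℕ => x / ((ρ + n) * (n + 1))) atTop (𝓝 0) := by
  have hρ : Tendsto (fun n : ℕ => ρ + n) atTop (Bornology.cobounded ℂ) :=
    (tendsto_const_add_cobounded ρ).comp tendsto_natCast_atTop_cobounded
  have hone : Tendsto (fun n : ℕ => 1 + (n : ℂ)) atTop (Bornology.cobounded ℂ) :=
    (tendsto_const_add_cobounded 1).comp tendsto_natCast_atTop_cobounded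
  have := tendsto_const_nhds (x := x).mul
    ((tendsto_inv₀_cobounded.comp hρ).mul (tendsto_inv₀_cobounded.comp hone))
  rw [mul_zero, mul_zero] at this
  refine this.congr fun n => ?_
  simp only [Function.comp_apply, div_eq_mul_inv, mul_inv, add_comm (1 : ℂ)]

theorem summable_norm_hyp0F1Term (ρ x : ℂ) : Summable fun n => ‖hyp0F1Term ρ x n‖ := by
  refine summable_of_ratio_norm_eventually_le (r := 1 / 2) (by norm_num) ?_
  filter_upwards [(tendsto_div_mul_add_one_atTop_zero ρ x).norm.eventually
    (ge_mem_nhds (by norm_num : ‖(0 : ℂ)‖ < 1 / 2))] with n hn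
  rw [norm_norm, norm_norm, hyp0F1Term_succ, norm_mul, mul_comm]
  exact mul_le_mul_of_nonneg_right hn (norm_nonneg _)

theorem hyp0F1Term_mul_hyp0F1Term_neg (ρ x : ℂ) {k j : ℕ} (h : poch ρ (k + j) ≠ 0) :
    hyp0F1Term ρ x k * hyp0F1Term ρ (-x) j =
      x ^ (k + j) / ((k + j)! * poch ρ (k + j) ^ 2) *
        ((-1) ^ j * (k + j).choose k * ((descPochhammer ℂ k).eval (ρ + ↑(k + j) - 1) *
          (descPochhammer ℂ j).eval (ρ + ↑(k + j) - 1))) := by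
  have h' : poch ρ (j + k) ≠ 0 := add_comm k j ▸ h
  have hk : (descPochhammer ℂ k).eval (ρ + ↑(k + j) - 1) = poch (ρ + j) k := by
    rw [← descPochhammer_eval_add_sub_one]; push_cast; ring_nf
  have hj : (descPochhammer ℂ j).eval (ρ + ↑(k + j) - 1) = poch (ρ + k) j := by
    rw [← descPochhammer_eval_add_sub_one]; push_cast; ring_nf
  have hsq : poch ρ (k + j) ^ 2 = poch ρ k * poch (ρ + k) j * (poch ρ j * poch (ρ + j) k) := by
    rw [sq, ← poch_add, ← poch_add, add_comm j k]
  have hfac : ((k + j).choose k * k ! * j ! : ℂ) = (k + j)! := by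
    rw [choose_symm_add]; exact_mod_cast add_choose_mul_factorial_mul_factorial k j
  have hchoose : ((k + j).choose k : ℂ) ≠ 0 := by
    exact_mod_cast (choose_pos (le_add_right k j)).ne'
  have hρk := left_ne_zero_of_poch_add h
  have hρj := left_ne_zero_of_poch_add h'
  have hρkj := right_ne_zero_of_poch_add h
  have hρjk := right_ne_zero_of_poch_add h'
  rw [hk, hj, hsq, ← hfac, hyp0F1Term, hyp0F1Term]
  field_simp
  ring

theorem sum_antidiagonal_hyp0F1Term_mul (ρ x : ℂ) {n : ℕ} (h : poch ρ n ≠ 0) :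
    ∑ p ∈ antidiagonal n, hyp0F1Term ρ x p.1 * hyp0F1Term ρ (-x) p.2 =
      x ^ n / (n ! * poch ρ n ^ 2) *
        (∑ p ∈ antidiagonal n, ((-1) ^ p.2 * n.choose p.1 : ℂ[X]) *
          (descPochhammer ℂ p.1 * descPochhammer ℂ p.2)).eval (ρ + n - 1) := by
  rw [eval_finsetSum, mul_sum]
  refine sum_congr rfl fun ⟨k, j⟩ hkj => ?_
  rw [HasAntidiagonal.mem_antidiagonal] at hkj
  subst hkj
  simpa using hyp0F1Term_mul_hyp0F1Term_neg ρ x h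

theorem sum_antidiagonal_hyp0F1Term_mul_odd (ρ x : ℂ) {m : ℕ} (h : poch ρ (2 * m + 1) ≠ 0) :
    ∑ p ∈ antidiagonal (2 * m + 1), hyp0F1Term ρ x p.1 * hyp0F1Term ρ (-x) p.2 = 0 := by
  rw [sum_antidiagonal_hyp0F1Term_mul ρ x h,
    sum_antidiagonal_neg_one_pow_mul_choose_mul_descPochhammer, if_neg (by omega), eval_zero,
    mul_zero]

theorem sum_antidiagonal_hyp0F1Term_mul_two_mul (ρ x : ℂ) {m : ℕ} (h : poch ρ (2 * m) ≠ 0) :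
    ∑ p ∈ antidiagonal (2 * m), hyp0F1Term ρ x p.1 * hyp0F1Term ρ (-x) p.2 =
      (-x ^ 2 / 4) ^ m / (poch ρ m * poch (ρ / 2) m * poch ((ρ + 1) / 2) m * m !) := by
  rw [sum_antidiagonal_hyp0F1Term_mul ρ x h,
    sum_antidiagonal_neg_one_pow_mul_choose_mul_descPochhammer, if_pos (dvd_mul_right 2 m),
    Nat.mul_div_cancel_left m two_pos]
  have hsplit : poch ρ (2 * m) = poch ρ m * poch (ρ + m) m := by rw [two_mul, poch_add]
  have hdesc : (descPochhammer ℂ m).eval (ρ + ↑(2 * m) - 1) = poch (ρ + m) m := by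
    rw [← descPochhammer_eval_add_sub_one]; push_cast; ring_nf
  have hfac : (m ! * (2 * m).descFactorial m : ℂ) = (2 * m)! := by
    have := factorial_mul_descFactorial (show m ≤ 2 * m by omega)
    rw [show 2 * m - m = m by omega] at this
    exact_mod_cast this
  have hdup := poch_two_mul ρ m
  have h₁ : poch ρ m ≠ 0 := left_ne_zero_of_poch_add (two_mul m ▸ h)
  have h₂ : poch (ρ + m) m ≠ 0 := right_ne_zero_of_poch_add (two_mul m ▸ h)
  have h₃ : (2 * m).descFactorial m ≠ 0 := (descFactorial_pos.mpr (by omega)).ne'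
  have h₄ : poch (ρ / 2) m * poch ((ρ + 1) / 2) m ≠ 0 := by
    intro h0; apply h; rw [hdup, mul_assoc, h0, mul_zero]
  have hpow : (-x ^ 2 / 4) ^ m = (-1) ^ m * x ^ (2 * m) / 4 ^ m := by
    rw [neg_div, neg_pow, div_pow, ← pow_mul, mul_div_assoc]
  simp only [eval_mul, eval_pow, eval_neg, eval_one, eval_natCast, hdesc]
  rw [hpow, ← hfac, sq]
  nth_rw 1 [hsplit]
  rw [hdup]
  field_simp

theorem stmt6_general (ρ : ℂ) (hρ : ∀ k : ℕ, ρ ≠ -(k : ℂ))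
    (x : ℂ) :
    (∑' (m : ℕ), x ^ m / (poch ρ m * m.factorial)) *
      (∑' (n : ℕ), (-x) ^ n / (poch ρ n * n.factorial))
      = ∑' (m : ℕ), (-x ^ 2 / 4) ^ m /
          (poch ρ m * poch (ρ / 2) m * poch ((ρ + 1) / 2) m * m.factorial) := by
  have hpoch := poch_ne_zero hρ
  calc (∑' m, hyp0F1Term ρ x m) * ∑' n, hyp0F1Term ρ (-x) n
      = ∑' n, ∑ p ∈ antidiagonal n, hyp0F1Term ρ x p.1 * hyp0F1Term ρ (-x) p.2 :=
        tsum_mul_tsum_eq_tsum_sum_antidiagonal_of_summable_norm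
          (summable_norm_hyp0F1Term ρ x) (summable_norm_hyp0F1Term ρ (-x))
    _ = ∑' m, ∑ p ∈ antidiagonal (2 * m), hyp0F1Term ρ x p.1 * hyp0F1Term ρ (-x) p.2 :=
        (tsum_two_mul_of_odd_eq_zero fun m =>
          sum_antidiagonal_hyp0F1Term_mul_odd ρ x (hpoch _)).symm
    _ = _ := tsum_congr fun m => sum_antidiagonal_hyp0F1Term_mul_two_mul ρ x (hpoch _)

theorem stmt6 (ρ : ℂ) (hρ : ∀ k : ℕ, ρ ≠ -(k : ℂ))
    (hρ2 : ∀ k : ℕ, ρ / 2 ≠ -(k : ℂ)) (hρ3 : ∀ k : ℕ, (ρ + 1) / 2 ≠ -(k : ℂ))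
    (x : ℂ) :
    (∑' (m : ℕ), x ^ m / (poch ρ m * m.factorial)) *
      (∑' (n : ℕ), (-x) ^ n / (poch ρ n * n.factorial))
      = ∑' (m : ℕ), (-x ^ 2 / 4) ^ m /
          (poch ρ m * poch (ρ / 2) m * poch ((ρ + 1) / 2) m * m.factorial) :=
  stmt6_general ρ hρ x
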